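/- Let x ∈ R^{d−1} with d ≥ 2, and suppose the dual Diophantine type of x is strictly greater than d. Then for every y ∈ R, the point (x, y) ∈ R^d is very well approximable: there exists ε > 0 such that ‖q(x,y)‖ < q^{−1/d−ε} for infinitely many q ∈ N. -/

import Mathlib

open scoped Classical ENNReal
open Filter

/-- Sup-norm distance from `x ∈ ℝ^ℓ` to the nearest integer point of `ℤ^ℓ`. -/
noncomputable def distInt {l : ℕ} (x : Fin l → ℝ) : ℝ :=
  ⨅ p : Fin l → ℤ, ‖x - fun i => (p i : ℝ)‖

/-- Distance from `t ∈ ℝ` to the nearest integer. -/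
noncomputable def distZ (t : ℝ) : ℝ := ⨅ p : ℤ, |t - (p : ℝ)|

/-- The dual Diophantine type of `x ∈ ℝ^ℓ`:
`sup {τ > 0 : ‖⟨n,x⟩‖ < |n|_∞^{-τ} for infinitely many n ∈ ℤ^ℓ \ {0}}`,
valued in `ℝ≥0∞` (the sup of the empty set being `0`). -/
noncomputable def tauD {l : ℕ} (x : Fin l → ℝ) : ℝ≥0∞ :=
  ⨆ τ ∈ {τ : ℝ | 0 < τ ∧
    {n : Fin l → ℤ | n ≠ 0 ∧
      distZ (∑ i, (n i : ℝ) * x i) < ‖fun i => ((n i : ℝ))‖ ^ (-τ)}.Infinite},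
    ENNReal.ofReal τ

/-!
Take `τ > d` and one of the infinitely many `n` with `‖⟨n, x⟩‖ < |n|^{-τ}`, and put
`a = (n, 0)`, so that `⟨a, (x, y)⟩` is just as close to an integer `m`. Minkowski's linear forms
theorem applied to `q`, to `q zᵢ - pᵢ` for `i ≠ k` (where `|aₖ|` is maximal) and to the integral
form `q m - ⟨a, p⟩` yields `0 < q ≤ Q` with `|q zᵢ - pᵢ| ≤ s` for `i ≠ k` and `⟨a, p⟩ = q m`;
this relation bounds the `k`-th coordinate too. Taking `s = |n|^{-τ/d}` and
`Q = 3 |n|^{1 + (d-1)τ/d}` gives `‖q (x, y)‖ ≪ q^{-τ/(d + (d-1)τ)}`, an exponent exceeding `1/d`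
exactly because `τ > d`. As `|n| → ∞` these approximations become arbitrarily good, which forces
infinitely many distinct `q`, unless `(x, y)` is rational, when all multiples of a denominator work.
-/

open MeasureTheory Submodule Matrix

theorem distInt_le {N : ℕ} (v : Fin N → ℝ) (p : Fin N → ℤ) :
    distInt v ≤ ‖v - fun i => (p i : ℝ)‖ :=
  ciInf_le ⟨0, fun _ ⟨_, hq⟩ => hq ▸ norm_nonneg _⟩ p

theorem distInt_nonneg {N : ℕ} (v : Fin N → ℝ) : 0 ≤ distInt v :=
  Real.iInf_nonneg fun _ => norm_nonneg _

theorem distInt_natCast_mul_le {N : ℕ} (k : ℕ) (v : Fin N → ℝ) :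
    distInt (fun i => (k : ℝ) * v i) ≤ k * distInt v := by
  refine (le_ciInf fun p => (distInt_le _ fun i => k * p i).trans_eq ?_).trans_eq
    (Real.mul_iInf_of_nonneg k.cast_nonneg _).symm
  rw [← abs_of_nonneg (k.cast_nonneg : (0 : ℝ) ≤ k), ← Real.norm_eq_abs, ← norm_smul]
  congr 1
  ext i
  simp [mul_sub]

theorem distInt_natAbs_mul_le {N : ℕ} (z : Fin N → ℝ) (q : ℤ) (p : Fin N → ℤ) {r : ℝ}
    (hr : 0 ≤ r) (h : ∀ i, |q * z i - p i| ≤ r) :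
    distInt (fun i => (q.natAbs : ℝ) * z i) ≤ r := by
  refine (distInt_le _ fun i => q.sign * p i).trans <|
    (pi_norm_le_iff_of_nonneg hr).mpr fun i => ?_
  have hsign : |(q.sign : ℝ)| ≤ 1 := by
    rcases Int.sign_trichotomy q with h | h | h <;> simp [h]
  have hq : (q.natAbs : ℝ) = q.sign * q := by
    rw [Nat.cast_natAbs, Int.cast_abs, ← Int.cast_mul, Int.sign_mul_self_eq_abs, Int.cast_abs]
  calc ‖(q.natAbs : ℝ) * z i - ((q.sign * p i : ℤ) : ℝ)‖ = |(q.sign : ℝ)| * |q * z i - p i| := by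
        rw [Real.norm_eq_abs, ← abs_mul, hq]
        push_cast
        ring_nf
    _ ≤ 1 * r := mul_le_mul hsign (h i) (abs_nonneg _) zero_le_one
    _ = r := one_mul r

theorem finite_setOf_norm_intCast_le {ι : Type*} [Fintype ι] (B : ℝ) :
    {n : ι → ℤ | ‖fun i => (n i : ℝ)‖ ≤ B}.Finite := by
  refine (Set.finite_Icc (-fun _ => ⌈B⌉) fun _ => ⌈B⌉).subset fun n hn => ?_
  have h : ∀ i, |(n i : ℝ)| ≤ ⌈B⌉ := fun i =>
    (norm_le_pi_norm (fun i => (n i : ℝ)) i).trans (hn.trans (Int.le_ceil B))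
  exact ⟨fun i => by exact_mod_cast (abs_le.mp (h i)).1,
    fun i => by exact_mod_cast (abs_le.mp (h i)).2⟩

theorem Matrix.exists_int_ne_zero_abs_mulVec_le {ι : Type*} [Fintype ι] [DecidableEq ι]
    (M : Matrix ι ι ℝ) (hM : M.det ≠ 0) (c : ι → ℝ) (hc : ∀ j, 0 ≤ c j)
    (hvol : |M.det| < ∏ j, c j) :
    ∃ v : ι → ℤ, v ≠ 0 ∧ ∀ j, |(M *ᵥ fun i => (v i : ℝ)) j| ≤ c j := by
  set b := Pi.basisFun ℝ ι
  set box : Set (ι → ℝ) := Set.univ.pi fun j => Set.Icc (-c j) (c j)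
  have hdet : LinearMap.det (toLin' M) ≠ 0 := by rwa [LinearMap.det_toLin']
  have h_symm : ∀ u ∈ toLin' M ⁻¹' box, -u ∈ toLin' M ⁻¹' box := by
    intro u hu j _
    have := hu j (Set.mem_univ j)
    simp only [Set.mem_Icc, map_neg, Pi.neg_apply] at this ⊢
    constructor <;> linarith
  have h_conv : Convex ℝ (toLin' M ⁻¹' box) :=
    (convex_pi fun j _ => convex_Icc _ _).linear_preimage _
  have h_vol : volume (ZSpan.fundamentalDomain b) * 2 ^ Module.finrank ℝ (ι → ℝ) <
      volume (toLin' M ⁻¹' box) := by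
    rw [Measure.addHaar_preimage_linearMap _ hdet, LinearMap.det_toLin',
      ZSpan.fundamentalDomain_pi_basisFun, volume_pi_pi, volume_pi_pi]
    simp only [Real.volume_Ico, Real.volume_Icc, sub_zero, ENNReal.ofReal_one,
      Finset.prod_const_one, one_mul, Module.finrank_fintype_fun_eq_card]
    rw [← ENNReal.ofReal_prod_of_nonneg fun j _ => by linarith [hc j],
      ← ENNReal.ofReal_mul (abs_nonneg _), ← ENNReal.ofReal_ofNat,
      ← ENNReal.ofReal_pow zero_le_two, ENNReal.ofReal_lt_ofReal_iff_of_nonneg (by positivity),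
      abs_inv, Finset.prod_congr rfl fun j _ => (by ring : c j - -c j = 2 * c j),
      Finset.prod_mul_distrib, Finset.prod_const, Finset.card_univ, inv_mul_eq_div,
      lt_div_iff₀ (abs_pos.mpr hM)]
    gcongr
  have : Countable (span ℤ (Set.range b)) := inferInstance
  obtain ⟨u, hu0, hu⟩ := exists_ne_zero_mem_lattice_of_measure_mul_two_pow_lt_measure
    (L := (span ℤ (Set.range b)).toAddSubgroup) (ZSpan.isAddFundamentalDomain' b volume)
    h_symm h_conv h_vol
  have hint : ∀ i, ∃ n : ℤ, (n : ℝ) = (u : ι → ℝ) i := fun i =>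
    (b.mem_span_iff_repr_mem ℤ _).mp u.2 i
  choose v hv using hint
  have hvu : (fun i => (v i : ℝ)) = u := funext hv
  refine ⟨v, fun h => hu0 (Subtype.ext ?_), fun j => abs_le.mpr ?_⟩
  · ext i
    simp [← hv, h]
  · rw [hvu]
    exact hu j (Set.mem_univ j)

section LinearForms

variable {d : ℕ} (z : Fin d → ℝ) (a : Fin d → ℤ) (m : ℤ) (k : Fin d)

/-- Rows: the forms `q`, `q zᵢ - pᵢ` (`i ≠ k`) and `q m - ⟨a, p⟩` in the variable `(q, p)`. -/
noncomputable def approxMatrix : Matrix (Unit ⊕ Fin d) (Unit ⊕ Fin d) ℝ :=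
  (fromBlocks 1 0 (of fun i _ => z i) (-1)).updateRow (.inr k)
    (Sum.elim (fun _ => (m : ℝ)) fun i => -(a i : ℝ))

theorem det_approxMatrix : (approxMatrix z a m k).det = a k * (-1) ^ d := by
  have hrow : Sum.elim (fun _ => (m : ℝ)) (fun i => -(a i : ℝ)) =
      ∑ t : Unit ⊕ Fin d, Sum.elim (fun _ => (m : ℝ) - ∑ i, a i * z i) (fun i => (a i : ℝ)) t •
        fromBlocks 1 0 (of fun i (_ : Unit) => z i) (-1) t := by
    ext (_ | j) <;> simp [Fintype.sum_sum_type, fromBlocks, one_apply]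
  rw [approxMatrix, hrow, det_updateRow_sum, det_fromBlocks_zero₁₂]
  simp [det_neg]

theorem approxMatrix_mulVec (v : Unit ⊕ Fin d → ℝ) :
    approxMatrix z a m k *ᵥ v = Function.update
      (Sum.elim (fun _ => v (.inl ())) fun i => v (.inl ()) * z i - v (.inr i)) (.inr k)
      (v (.inl ()) * m - ∑ i, a i * v (.inr i)) := by
  rw [approxMatrix, updateRow_mulVec, fromBlocks_mulVec]
  congr 1
  · ext (_ | j) <;> simp [mulVec, dotProduct, sub_eq_add_neg, one_apply, mul_comm]
  · simp [dotProduct, Fintype.sum_sum_type, sub_eq_add_neg, mul_comm]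

theorem exists_int_ne_zero_of_linear_form (hak : a k ≠ 0) {s Q : ℝ} (hs0 : 0 ≤ s)
    (hvol : 2 * |(a k : ℝ)| < Q * s ^ (d - 1)) :
    ∃ v : Unit ⊕ Fin d → ℤ, v ≠ 0 ∧ |(v (.inl ()) : ℝ)| ≤ Q ∧
      (∀ i ≠ k, |v (.inl ()) * z i - v (.inr i)| ≤ s) ∧
      v (.inl ()) * m = ∑ i, a i * v (.inr i) := by
  have hQ : 0 < Q := pos_of_mul_pos_left ((by positivity : (0 : ℝ) ≤ 2 * |(a k : ℝ)|).trans_lt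
    hvol) (pow_nonneg hs0 _)
  let c : Unit ⊕ Fin d → ℝ := Sum.elim (fun _ => Q) (Function.update (fun _ => s) k (1 / 2))
  have hc : ∀ j, 0 ≤ c j := by
    rintro (_ | i)
    · exact hQ.le
    · simp only [c, Sum.elim_inr, Function.update_apply]
      split_ifs <;> linarith
  have hprod : |(approxMatrix z a m k).det| < ∏ j, c j := by
    rw [det_approxMatrix, Fintype.prod_sumElim, Finset.prod_update_of_mem (Finset.mem_univ k)]
    simp only [abs_mul, abs_pow, abs_neg, abs_one, one_pow, mul_one, Finset.prod_const,
      Finset.card_univ_sdiff, Finset.card_singleton, Finset.card_univ, Fintype.card_fin,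
      Fintype.card_unit, pow_one]
    linarith
  obtain ⟨v, hv0, hv⟩ := (approxMatrix z a m k).exists_int_ne_zero_abs_mulVec_le
    (by simp [det_approxMatrix, hak]) c hc hprod
  refine ⟨v, hv0, ?_, fun i hi => ?_, ?_⟩
  · simpa only [approxMatrix_mulVec, ne_eq, reduceCtorEq, not_false_eq_true,
      Function.update_of_ne, Sum.elim_inl, c] using hv (.inl ())
  · have hi' : (Sum.inr i : Unit ⊕ Fin d) ≠ .inr k := by simpa using hi
    simpa only [approxMatrix_mulVec, Function.update_of_ne hi', Sum.elim_inr, c,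
      Function.update_of_ne hi] using hv (.inr i)
  · have h := hv (.inr k)
    simp only [approxMatrix_mulVec, Function.update_self, c, Sum.elim_inr] at h
    have : |v (.inl ()) * m - ∑ i, a i * v (.inr i)| < 1 := by
      exact_mod_cast (by linarith : |(v (.inl ()) : ℝ) * m - ∑ i, (a i : ℝ) * v (.inr i)| < 1)
    linarith [Int.abs_lt_one_iff.mp this]

theorem exists_int_approx_of_linear_form (hak : a k ≠ 0) {s Q : ℝ} (hs0 : 0 ≤ s) (hs1 : s < 1)
    (hvol : 2 * |(a k : ℝ)| < Q * s ^ (d - 1)) :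
    ∃ q : ℤ, q ≠ 0 ∧ ∃ p : Fin d → ℤ, |(q : ℝ)| ≤ Q ∧
      (∀ i ≠ k, |q * z i - p i| ≤ s) ∧ q * m = ∑ i, a i * p i := by
  obtain ⟨v, hv0, hq, hp, hrel⟩ := exists_int_ne_zero_of_linear_form z a m k hak hs0 hvol
  refine ⟨_, fun hq0 => hv0 ?_, _, hq, hp, hrel⟩
  have hpi : ∀ i ≠ k, v (.inr i) = 0 := fun i hi => by
    have : |(v (.inr i) : ℝ)| < 1 := by simpa [hq0] using (hp i hi).trans_lt hs1
    exact Int.abs_lt_one_iff.mp (by exact_mod_cast this)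
  have hpk : v (.inr k) = 0 := by
    rw [hq0, zero_mul, Finset.sum_eq_single k (fun i _ hi => by rw [hpi i hi, mul_zero])
      (by simp)] at hrel
    exact (mul_eq_zero.mp hrel.symm).resolve_left hak
  ext (_ | i)
  · exact hq0
  · by_cases hi : i = k
    · exact hi ▸ hpk
    · exact hpi i hi

theorem abs_mul_sub_le_of_linear_form (q : ℤ) (p : Fin d → ℤ) (hak : a k ≠ 0)
    (hk : ∀ i, |(a i : ℝ)| ≤ |(a k : ℝ)|) {s : ℝ} (hp : ∀ i ≠ k, |q * z i - p i| ≤ s)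
    (hrel : q * m = ∑ i, a i * p i) :
    |q * z k - p k| ≤ (d - 1) * s + |(q : ℝ)| * |∑ i, a i * z i - m| / |(a k : ℝ)| := by
  have hak' : 0 < |(a k : ℝ)| := by positivity
  have hsum : ∑ i, (a i : ℝ) * (q * z i - p i) = q * (∑ i, a i * z i - m) := by
    have : (q : ℝ) * m = ∑ i, (a i : ℝ) * p i := by exact_mod_cast hrel
    rw [mul_sub, this, Finset.mul_sum, ← Finset.sum_sub_distrib]
    exact Finset.sum_congr rfl fun i _ => by ring
  have hrest : |∑ i ∈ Finset.univ.erase k, (a i : ℝ) * (q * z i - p i)| ≤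
      (d - 1) * (|(a k : ℝ)| * s) := by
    calc _ ≤ ∑ i ∈ Finset.univ.erase k, |(a i : ℝ) * (q * z i - p i)| :=
          Finset.abs_sum_le_sum_abs _ _
      _ ≤ ∑ i ∈ Finset.univ.erase k, |(a k : ℝ)| * s := Finset.sum_le_sum fun i hi => by
          rw [abs_mul]
          exact mul_le_mul (hk i) (hp i (Finset.ne_of_mem_erase hi)) (abs_nonneg _) hak'.le
      _ = (d - 1) * (|(a k : ℝ)| * s) := by
          rw [Finset.sum_const, Finset.card_erase_of_mem (Finset.mem_univ k), Finset.card_univ,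
            Fintype.card_fin, nsmul_eq_mul, Nat.cast_pred (Fin.pos k)]
  have hk_term : (a k : ℝ) * (q * z k - p k) = q * (∑ i, a i * z i - m) -
      ∑ i ∈ Finset.univ.erase k, (a i : ℝ) * (q * z i - p i) := by
    rw [← hsum, ← Finset.add_sum_erase _ _ (Finset.mem_univ k), add_sub_cancel_right]
  have : |(a k : ℝ)| * |q * z k - p k| ≤
      |(q : ℝ)| * |∑ i, a i * z i - m| + (d - 1) * (|(a k : ℝ)| * s) := by
    rw [← abs_mul, hk_term, ← abs_mul]
    exact (abs_sub _ _).trans (by linarith)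
  calc |q * z k - p k| = |(a k : ℝ)| * |q * z k - p k| / |(a k : ℝ)| := by field_simp
    _ ≤ (|(q : ℝ)| * |∑ i, a i * z i - m| + (d - 1) * (|(a k : ℝ)| * s)) / |(a k : ℝ)| := by
        gcongr
    _ = _ := by field_simp; ring

theorem exists_distInt_le_of_linear_form (ha : a ≠ 0) {s Q : ℝ} (hs0 : 0 ≤ s) (hs1 : s < 1)
    (hvol : 2 * ‖fun i => (a i : ℝ)‖ < Q * s ^ (d - 1)) :
    ∃ q : ℕ, 0 < q ∧ (q : ℝ) ≤ Q ∧ distInt (fun i => (q : ℝ) * z i) ≤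
      d * s + Q * |∑ i, a i * z i - m| / ‖fun i => (a i : ℝ)‖ := by
  obtain ⟨i₀, hi₀⟩ := Function.ne_iff.mp ha
  obtain ⟨k, -, hk⟩ := Finset.univ.exists_max_image (fun i => |(a i : ℝ)|) ⟨i₀, Finset.mem_univ _⟩
  replace hk : ∀ i, |(a i : ℝ)| ≤ |(a k : ℝ)| := fun i => hk i (Finset.mem_univ i)
  have hnorm : ‖fun i => (a i : ℝ)‖ = |(a k : ℝ)| :=
    le_antisymm ((pi_norm_le_iff_of_nonneg (abs_nonneg _)).mpr hk)
      (norm_le_pi_norm (fun i => (a i : ℝ)) k)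
  have hak : a k ≠ 0 := by
    have : (a i₀ : ℝ) ≠ 0 := by exact_mod_cast hi₀
    exact_mod_cast abs_pos.mp ((abs_pos.mpr this).trans_le (hk i₀))
  rw [hnorm] at hvol ⊢
  obtain ⟨q, hq0, p, hqQ, hp, hrel⟩ := exists_int_approx_of_linear_form z a m k hak hs0 hs1 hvol
  have hpk := abs_mul_sub_le_of_linear_form z a m k q p hak hk hp hrel
  have hd : (1 : ℝ) ≤ d := by exact_mod_cast Fin.pos k
  have hδ : 0 ≤ |(q : ℝ)| * |∑ i, a i * z i - m| / |(a k : ℝ)| := by positivity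
  have hQδ : |(q : ℝ)| * |∑ i, a i * z i - m| / |(a k : ℝ)| ≤
      Q * |∑ i, a i * z i - m| / |(a k : ℝ)| := by gcongr
  refine ⟨q.natAbs, Int.natAbs_pos.mpr hq0, by rwa [Nat.cast_natAbs, Int.cast_abs],
    distInt_natAbs_mul_le z q p (by nlinarith) fun i => ?_⟩
  by_cases hi : i = k
  · subst hi
    nlinarith
  · nlinarith [hp i hi]

end LinearForms

theorem exists_distInt_le_of_abs_sub_lt {l : ℕ} (z : Fin (l + 1) → ℝ) (a : Fin (l + 1) → ℤ)
    (m : ℤ) {β : ℝ} (hβ : 0 < β) (ha : 1 < ‖fun i => (a i : ℝ)‖)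
    (hδ : |∑ i, a i * z i - m| < ‖fun i => (a i : ℝ)‖ ^ (-((l + 1) * β))) :
    ∃ q : ℕ, 0 < q ∧
      distInt (fun i => (q : ℝ) * z i) < (l + 4) * ‖fun i => (a i : ℝ)‖ ^ (-β) ∧
      distInt (fun i => (q : ℝ) * z i) ≤
        (l + 4) * 3 ^ (β / (1 + l * β)) * (q : ℝ) ^ (-(β / (1 + l * β))) := by
  set e := β / (1 + l * β)
  set A := ‖fun i => (a i : ℝ)‖
  have hA0 : 0 < A := one_pos.trans ha
  have ha0 : a ≠ 0 := by
    rintro rfl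
    norm_num [A, ← Pi.zero_def] at ha
  -- `s` and `Q` make Minkowski's condition `Q s ^ l > 2 A` hold while `Q |δ| / A < 3 s`.
  set s := A ^ (-β)
  set Q := 3 * A ^ (1 + l * β)
  have hQs : Q * s ^ l = 3 * A := by
    rw [mul_assoc, ← Real.rpow_natCast, ← Real.rpow_mul hA0.le, ← Real.rpow_add hA0]
    ring_nf
    rw [Real.rpow_one]
  have hQδ : Q * A ^ (-((l + 1) * β)) / A = 3 * s := by
    rw [mul_assoc, mul_div_assoc, ← Real.rpow_add hA0, ← Real.rpow_sub_one hA0.ne']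
    ring_nf
    rfl
  have hsQ : s = (Q / 3) ^ (-e) := by
    rw [mul_div_cancel_left₀ _ three_ne_zero, ← Real.rpow_mul hA0.le]
    simp only [s, e]
    field_simp
  obtain ⟨q, hq0, hqQ, hq⟩ := exists_distInt_le_of_linear_form z a m ha0 (by positivity)
    (Real.rpow_lt_one_of_one_lt_of_neg ha (neg_neg_of_pos hβ))
    (by rw [Nat.add_sub_cancel, hQs]; linarith)
  have hQδ' : Q * |∑ i, a i * z i - m| / A < 3 * s := hQδ ▸ by gcongr
  have hqR : (0 : ℝ) < q := by exact_mod_cast hq0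
  have hsq : s ≤ 3 ^ e * (q : ℝ) ^ (-e) :=
    calc s = (Q / 3) ^ (-e) := hsQ
      _ ≤ (q / 3) ^ (-e) := Real.rpow_le_rpow_of_nonpos (by positivity) (by linarith)
          (neg_nonpos.mpr (by positivity))
      _ = 3 ^ e * (q : ℝ) ^ (-e) := by
          rw [Real.div_rpow hqR.le zero_le_three, Real.rpow_neg zero_le_three, div_inv_eq_mul,
            mul_comm]
  push_cast at hq
  refine ⟨q, hq0, by linarith, hq.trans ?_⟩
  nlinarith [Real.rpow_pos_of_pos hA0 (-β)]

theorem sum_snoc_mul_snoc {l : ℕ} (n : Fin l → ℤ) (x : Fin l → ℝ) (y : ℝ) :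
    ∑ i, ((Fin.snoc n 0 : Fin (l + 1) → ℤ) i : ℝ) * (Fin.snoc x y : Fin (l + 1) → ℝ) i =
      ∑ i, (n i : ℝ) * x i := by
  simp [Fin.sum_univ_castSucc]

theorem norm_snoc_zero_intCast {l : ℕ} (n : Fin l → ℤ) :
    ‖fun i => ((Fin.snoc n 0 : Fin (l + 1) → ℤ) i : ℝ)‖ = ‖fun i => (n i : ℝ)‖ := by
  refine le_antisymm ((pi_norm_le_iff_of_nonneg (norm_nonneg _)).mpr fun i => ?_)
    ((pi_norm_le_iff_of_nonneg (norm_nonneg _)).mpr fun i => ?_)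
  · induction i using Fin.lastCases with
    | last => simp
    | cast i => simpa using norm_le_pi_norm (fun i => (n i : ℝ)) i
  · simpa using norm_le_pi_norm (fun i => ((Fin.snoc n 0 : Fin (l + 1) → ℤ) i : ℝ)) i.castSucc

theorem exists_distInt_snoc_lt_of_infinite {l : ℕ} (x : Fin l → ℝ) (y : ℝ) {β : ℝ}
    (hβ : 0 < β) (hinf : {n : Fin l → ℤ | n ≠ 0 ∧
      distZ (∑ i, (n i : ℝ) * x i) < ‖fun i => (n i : ℝ)‖ ^ (-((l + 1) * β))}.Infinite)
    {η : ℝ} (hη : 0 < η) :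
    ∃ q : ℕ, 0 < q ∧
      distInt (fun i => (q : ℝ) * (Fin.snoc x y : Fin (l + 1) → ℝ) i) < η ∧
      distInt (fun i => (q : ℝ) * (Fin.snoc x y : Fin (l + 1) → ℝ) i) ≤
        (l + 4) * 3 ^ (β / (1 + l * β)) * (q : ℝ) ^ (-(β / (1 + l * β))) := by
  have hlim : Tendsto (fun A : ℝ => (l + 4) * A ^ (-β)) atTop (nhds 0) := by
    simpa using (tendsto_rpow_neg_atTop hβ).const_mul ((l : ℝ) + 4)
  obtain ⟨B, hB⟩ := eventually_atTop.mp
    ((eventually_gt_atTop 1).and (hlim.eventually (gt_mem_nhds hη)))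
  obtain ⟨n, ⟨-, hn⟩, hnB⟩ := (hinf.sdiff (finite_setOf_norm_intCast_le B)).nonempty
  obtain ⟨hn1, hnη⟩ := hB _ (le_of_not_ge hnB)
  obtain ⟨m, hm⟩ := exists_lt_of_ciInf_lt hn
  rw [← sum_snoc_mul_snoc n x y, ← norm_snoc_zero_intCast] at hm
  rw [← norm_snoc_zero_intCast] at hn1 hnη
  obtain ⟨q, hq0, hqη, hq⟩ := exists_distInt_le_of_abs_sub_lt _ _ m hβ hn1 hm
  exact ⟨q, hq0, hqη.trans hnη, hq⟩

theorem infinite_setOf_distInt_lt_rpow {N : ℕ} (z : Fin N → ℝ) {C e α : ℝ} (hα : α < e)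
    (h : ∀ η > 0, ∃ q : ℕ, 0 < q ∧ distInt (fun i => (q : ℝ) * z i) < η ∧
      distInt (fun i => (q : ℝ) * z i) ≤ C * (q : ℝ) ^ (-e)) :
    {q : ℕ | 0 < q ∧ distInt (fun i => (q : ℝ) * z i) < (q : ℝ) ^ (-α)}.Infinite := by
  have hlarge : ∀ᶠ q : ℕ in atTop, C * (q : ℝ) ^ (-e) < (q : ℝ) ^ (-α) := by
    filter_upwards [eventually_gt_atTop 0, ((tendsto_rpow_atTop (sub_pos.mpr hα)).comp
      tendsto_natCast_atTop_atTop).eventually_gt_atTop C] with q hq hC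
    have hq' : (0 : ℝ) < q := by exact_mod_cast hq
    rw [show -α = (e - α) + -e by ring, Real.rpow_add hq']
    exact mul_lt_mul_of_pos_right hC (by positivity)
  obtain ⟨N₀, hN₀⟩ := eventually_atTop.mp hlarge
  refine Set.infinite_of_forall_exists_gt fun M => ?_
  by_cases hrat : ∃ q₀ : ℕ, 0 < q₀ ∧ distInt (fun i => (q₀ : ℝ) * z i) = 0
  · obtain ⟨q₀, hq₀, hz⟩ := hrat
    have hzero : distInt (fun i => (((M + 1) * q₀ : ℕ) : ℝ) * z i) ≤ 0 := by
      simpa [hz, mul_assoc] using distInt_natCast_mul_le (M + 1) fun i => (q₀ : ℝ) * z i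
    exact ⟨(M + 1) * q₀, ⟨by positivity, hzero.trans_lt (by positivity)⟩, by nlinarith⟩
  · push Not at hrat
    set K := M + N₀ + 1
    obtain ⟨q₁, hq₁, hmin⟩ := (Finset.Icc 1 K).exists_min_image
      (fun q => distInt (fun i => (q : ℝ) * z i)) ⟨1, by simp [K]⟩
    have hρ := (distInt_nonneg _).lt_of_ne (hrat q₁ (Finset.mem_Icc.mp hq₁).1).symm
    obtain ⟨q, hq0, hqρ, hqC⟩ := h _ hρ
    have hqK : K < q := by
      by_contra hle
      exact (hmin q (Finset.mem_Icc.mpr ⟨hq0, not_lt.mp hle⟩)).not_gt hqρ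
    exact ⟨q, ⟨hq0, hqC.trans_lt (hN₀ q (by omega))⟩, by omega⟩

theorem exists_lt_of_natCast_lt_tauD {l d : ℕ} {x : Fin l → ℝ} (h : (d : ℝ≥0∞) < tauD x) :
    ∃ τ : ℝ, (d : ℝ) < τ ∧ {n : Fin l → ℤ | n ≠ 0 ∧
      distZ (∑ i, (n i : ℝ) * x i) < ‖fun i => (n i : ℝ)‖ ^ (-τ)}.Infinite := by
  obtain ⟨τ, hτ⟩ := lt_iSup_iff.mp h
  obtain ⟨⟨-, hinf⟩, hdτ⟩ := lt_iSup_iff.mp hτ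
  rw [← ENNReal.ofReal_natCast, ENNReal.ofReal_lt_ofReal_iff_of_nonneg d.cast_nonneg] at hdτ
  exact ⟨τ, hdτ, hinf⟩

theorem stmt_6_general (l d : ℕ) (hd : d = l + 1) (x : Fin l → ℝ)
    (htype : (d : ℝ≥0∞) < tauD x) :
    ∀ y : ℝ, ∃ ε : ℝ, 0 < ε ∧
      {q : ℕ | 0 < q ∧
        distInt (fun i : Fin (l + 1) => (q : ℝ) * (Fin.snoc x y : Fin (l + 1) → ℝ) i) <
          (q : ℝ) ^ (-(1 / d : ℝ) - ε)}.Infinite := by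
  subst hd
  intro y
  obtain ⟨τ, hτ, hinf⟩ := exists_lt_of_natCast_lt_tauD htype
  push_cast at hτ ⊢
  set β := τ / (l + 1)
  rw [show τ = (l + 1) * β by simp only [β]; field_simp] at hinf
  have hβ : 1 < β := (one_lt_div (by positivity)).mpr hτ
  set e := β / (1 + l * β)
  have he : 1 / (l + 1) < e := by
    rw [div_lt_div_iff₀ (by positivity) (by positivity)]
    linarith
  refine ⟨(e - 1 / (l + 1)) / 2, by linarith, ?_⟩
  rw [← neg_add']
  exact infinite_setOf_distInt_lt_rpow _ (by linarith)
    fun η hη => exists_distInt_snoc_lt_of_infinite x y (by linarith) hinf hη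

theorem stmt_6 (l d : ℕ) (hd : d = l + 1) (hd2 : 2 ≤ d) (x : Fin l → ℝ)
    (htype : (d : ℝ≥0∞) < tauD x) :
    ∀ y : ℝ, ∃ ε : ℝ, 0 < ε ∧
      {q : ℕ | 0 < q ∧
        distInt (fun i : Fin (l + 1) => (q : ℝ) * (Fin.snoc x y : Fin (l + 1) → ℝ) i) <
          (q : ℝ) ^ (-(1 / d : ℝ) - ε)}.Infinite :=
  stmt_6_general l d hd x htype
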